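/- Equip ℝ² with the British rail metric d(x, y) := ‖x‖ + ‖y‖ for x ≠ y and d(x, x) := 0, where ‖·‖ is the Euclidean norm (this d is a metric on ℝ²). Let P be an atomless Borel probability measure on ℝ² (Borel with respect to the Euclidean topology). Then the metric spatial depth of the origin, computed with the British rail metric, equals D(0; P) = 2; more precisely, for any μ ∈ ℝ², D(μ; P) = E[ 2‖X₁‖‖X₂‖ / ((‖X₁‖ + ‖μ‖)(‖X₂‖ + ‖μ‖)) ] where X₁, X₂ are independent with law P. -/
import Mathlib


open MeasureTheory
open scoped Classical

/-- The kernel of the metric spatial depth, for a general distance function `d`. -/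
noncomputable def mhGen {X : Type*} (d : X → X → ℝ) (x₁ x₂ x₃ : X) : ℝ :=
  if x₃ = x₁ ∨ x₃ = x₂ then 0
  else (d x₁ x₃ ^ 2 + d x₂ x₃ ^ 2 - d x₁ x₂ ^ 2) / (d x₁ x₃ * d x₂ x₃)

/-- The metric spatial depth with respect to a general distance function `d`. -/
noncomputable def msDepthGen {X : Type*} [MeasurableSpace X] (d : X → X → ℝ)
    (μ : X) (P : Measure X) : ℝ :=
  1 - (1 / 2) * ∫ x₁, ∫ x₂, mhGen d x₁ x₂ μ ∂P ∂P

/-- The British rail metric on the Euclidean plane. -/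
noncomputable def brDist (x y : EuclideanSpace ℝ (Fin 2)) : ℝ :=
  if x = y then 0 else ‖x‖ + ‖y‖

private lemma aux_ae_ne (P : Measure (EuclideanSpace ℝ (Fin 2)))
    (h : ∀ x, P {x} = 0) (y : EuclideanSpace ℝ (Fin 2)) : ∀ᵐ x ∂P, x ≠ y := by
  rw [ae_iff]
  convert h y using 2
  ext x; simp

private lemma denom_ne {x μ : EuclideanSpace ℝ (Fin 2)} (h : x ≠ μ) :
    ‖x‖ + ‖μ‖ ≠ 0 := by
  intro h0
  have hx : ‖x‖ = 0 := le_antisymm (by nlinarith [norm_nonneg x, norm_nonneg μ]) (norm_nonneg x)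
  have hμ : ‖μ‖ = 0 := by linarith
  exact h (by rw [norm_eq_zero] at hx hμ; rw [hx, hμ])

private lemma mhGen_eq {x₁ x₂ μ : EuclideanSpace ℝ (Fin 2)} (h1 : x₁ ≠ μ) (h2 : x₂ ≠ μ)
    (h12 : x₁ ≠ x₂) :
    mhGen brDist x₁ x₂ μ =
      2 - 2 * (2 * ‖x₁‖ * ‖x₂‖ / ((‖x₁‖ + ‖μ‖) * (‖x₂‖ + ‖μ‖))) := by
  have ha := denom_ne h1
  have hb := denom_ne h2
  unfold mhGen brDist
  rw [if_neg (by push_neg; exact ⟨Ne.symm h1, Ne.symm h2⟩),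
    if_neg h1, if_neg h2, if_neg h12]
  field_simp
  ring

private lemma g_abs_le (a b m : ℝ) (ha : 0 ≤ a) (hb : 0 ≤ b) (hm : 0 ≤ m) :
    |2 * a * b / ((a + m) * (b + m))| ≤ 2 := by
  rcases eq_or_lt_of_le (show (0:ℝ) ≤ (a + m) * (b + m) by positivity) with h | h
  · rw [← h, div_zero]; norm_num
  · rw [abs_of_nonneg (by positivity), div_le_iff₀ h]
    nlinarith

theorem msDepth_britishRail (P : Measure (EuclideanSpace ℝ (Fin 2)))
    [IsProbabilityMeasure P] (hatomless : ∀ x, P {x} = 0) :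
    (∀ μ : EuclideanSpace ℝ (Fin 2), msDepthGen brDist μ P =
      ∫ x₁, ∫ x₂, 2 * ‖x₁‖ * ‖x₂‖ / ((‖x₁‖ + ‖μ‖) * (‖x₂‖ + ‖μ‖)) ∂P ∂P) ∧
    msDepthGen brDist 0 P = 2 := by
  have key : ∀ μ : EuclideanSpace ℝ (Fin 2), msDepthGen brDist μ P =
      ∫ x₁, ∫ x₂, 2 * ‖x₁‖ * ‖x₂‖ / ((‖x₁‖ + ‖μ‖) * (‖x₂‖ + ‖μ‖)) ∂P ∂P := by
    intro μ
    set g : EuclideanSpace ℝ (Fin 2) → EuclideanSpace ℝ (Fin 2) → ℝ :=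
      fun x₁ x₂ => 2 * ‖x₁‖ * ‖x₂‖ / ((‖x₁‖ + ‖μ‖) * (‖x₂‖ + ‖μ‖)) with hg
    have hmeas : Measurable
        (fun p : EuclideanSpace ℝ (Fin 2) × EuclideanSpace ℝ (Fin 2) => g p.1 p.2) := by
      apply Measurable.div
      · exact (measurable_const.mul (measurable_norm.comp measurable_fst)).mul
          (measurable_norm.comp measurable_snd)
      · exact ((measurable_norm.comp measurable_fst).add measurable_const).mul
          ((measurable_norm.comp measurable_snd).add measurable_const)
    have hbound : ∀ x₁ x₂, ‖g x₁ x₂‖ ≤ 2 := fun x₁ x₂ => by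
      simpa [Real.norm_eq_abs] using
        g_abs_le ‖x₁‖ ‖x₂‖ ‖μ‖ (norm_nonneg _) (norm_nonneg _) (norm_nonneg _)
    have hint : ∀ x₁, Integrable (fun x₂ => g x₁ x₂) P := fun x₁ =>
      Integrable.mono' (integrable_const 2)
        ((hmeas.comp measurable_prodMk_left).aestronglyMeasurable)
        (ae_of_all _ fun x₂ => hbound x₁ x₂)
    have hG_meas : StronglyMeasurable (fun x₁ => ∫ x₂, g x₁ x₂ ∂P) :=
      (show StronglyMeasurable (Function.uncurry g) from hmeas.stronglyMeasurable).integral_prod_right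
    have hG_bound : ∀ x₁, ‖∫ x₂, g x₁ x₂ ∂P‖ ≤ 2 := fun x₁ => by
      calc ‖∫ x₂, g x₁ x₂ ∂P‖ ≤ 2 * (P Set.univ).toReal :=
            norm_integral_le_of_norm_le_const (ae_of_all _ fun x₂ => hbound x₁ x₂)
        _ = 2 := by simp
    have hG_int : Integrable (fun x₁ => ∫ x₂, g x₁ x₂ ∂P) P :=
      Integrable.mono' (integrable_const 2) hG_meas.aestronglyMeasurable
        (ae_of_all _ hG_bound)
    have inner_eq : ∀ᵐ x₁ ∂P,
        ∫ x₂, mhGen brDist x₁ x₂ μ ∂P = 2 - 2 * ∫ x₂, g x₁ x₂ ∂P := by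
      filter_upwards [aux_ae_ne P hatomless μ] with x₁ h1
      have heq : ∫ x₂, mhGen brDist x₁ x₂ μ ∂P = ∫ x₂, (2 - 2 * g x₁ x₂) ∂P := by
        apply integral_congr_ae
        filter_upwards [aux_ae_ne P hatomless μ, aux_ae_ne P hatomless x₁] with x₂ h2 h12
        exact mhGen_eq h1 h2 (Ne.symm h12)
      rw [heq, integral_sub (integrable_const 2) ((hint x₁).const_mul 2),
        integral_const, integral_const_mul]
      simp
    have outer : ∫ x₁, ∫ x₂, mhGen brDist x₁ x₂ μ ∂P ∂P
        = 2 - 2 * ∫ x₁, ∫ x₂, g x₁ x₂ ∂P ∂P := by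
      rw [integral_congr_ae inner_eq,
        integral_sub (integrable_const 2) (hG_int.const_mul 2),
        integral_const, integral_const_mul]
      simp
    rw [msDepthGen, outer]; ring
  refine ⟨key, ?_⟩
  rw [key 0]
  have inner2 : ∀ᵐ x₁ ∂P,
      (∫ x₂, 2 * ‖x₁‖ * ‖x₂‖ /
        ((‖x₁‖ + ‖(0 : EuclideanSpace ℝ (Fin 2))‖) *
          (‖x₂‖ + ‖(0 : EuclideanSpace ℝ (Fin 2))‖)) ∂P) = 2 := by
    filter_upwards [aux_ae_ne P hatomless 0] with x₁ h1
    have heq : ∫ x₂, 2 * ‖x₁‖ * ‖x₂‖ /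
        ((‖x₁‖ + ‖(0 : EuclideanSpace ℝ (Fin 2))‖) *
          (‖x₂‖ + ‖(0 : EuclideanSpace ℝ (Fin 2))‖)) ∂P = ∫ _x₂, (2:ℝ) ∂P := by
      apply integral_congr_ae
      filter_upwards [aux_ae_ne P hatomless 0] with x₂ h2
      have hx1 : ‖x₁‖ ≠ 0 := norm_ne_zero_iff.mpr h1
      have hx2 : ‖x₂‖ ≠ 0 := norm_ne_zero_iff.mpr h2
      rw [norm_zero]
      field_simp
      ring
    rw [heq]; simp
  rw [integral_congr_ae inner2]; simp
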